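/- arXiv:0705.3790 — 2 statements merged into one kernel-verified Lean document; each statement's English description precedes it below -/
import Mathlib

section
/- Let n ≥ 1, let f : ℝ → (Hermitian complex n×n matrices) be differentiable at λ with derivative f'(λ), and let Z(t) = Re trace(exp(−f(t))) (a positive real number). Then the generating functional t ↦ W(f(t)) = −log Z(t) is differentiable at λ with derivative Re trace(exp(−f(λ))·f'(λ)) / Z(λ); that is, dW(f) = ⟨df⟩_f. -/
/-!
For a continuous trace `τ` on a Banach algebra, cyclicity collapses the noncommutative derivative
`h ↦ ∑ᵢ x ^ (k-1-i) * h * x ^ i` of `x ^ k` to `h ↦ k • τ (x ^ (k-1) * h)`. Differentiating the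
exponential series termwise (the derivative series is dominated near `y` by the exponential series
of `‖y‖ + 1`) gives `d τ (exp x) = τ (exp x * ·)`. For the matrix trace and `x = -f t` the chain
rule then yields the formula, the logarithm being differentiable because `exp A = Bᴴ * B` with
`B = exp (A / 2)` invertible is positive definite for Hermitian `A`, so that `Z > 0`.
-/

open Matrix

attribute [local instance] Matrix.linftyOpNormedRing Matrix.linftyOpNormedAlgebra

open NormedSpace ContinuousLinearMap Nat

section Tracial

variable {𝕂 A : Type*} [RCLike 𝕂] [NormedRing A] [NormedAlgebra 𝕂 A]

theorem hasSum_termwise_deriv_exp [CompleteSpace A] (y : A) :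
    HasSum (fun k : ℕ => ((k ! : 𝕂)⁻¹ * k) • y ^ (k - 1)) (exp y) := by
  refine (hasSum_nat_add_iff' 1).1 ?_
  have hcoeff (k : ℕ) : (((k + 1)! : ℕ) : 𝕂)⁻¹ * ((k : 𝕂) + 1) = (k ! : 𝕂)⁻¹ := by
    push_cast [factorial_succ]
    field_simp
  simpa [hcoeff] using exp_series_hasSum_exp' (𝕂 := 𝕂) y

variable {τ : A →L[𝕂] 𝕂}

theorem hasFDerivAt_tracial_pow (hτ : ∀ a b, τ (a * b) = τ (b * a)) (k : ℕ) (y : A) :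
    HasFDerivAt (fun x => τ (x ^ k)) ((k : 𝕂) • τ.comp (mul 𝕂 A (y ^ (k - 1)))) y := by
  refine (τ.hasFDerivAt.comp y (hasFDerivAt_pow' k)).congr_fderiv (ext fun h => ?_)
  have hcyc : ∀ i ∈ Finset.range k, τ (y ^ (k - 1 - i) * h * y ^ i) = τ (y ^ (k - 1) * h) := by
    intro i hi
    have : i + (k - 1 - i) = k - 1 := by grind
    rw [hτ, ← mul_assoc, ← pow_add, this]
  simp [map_sum, Finset.sum_congr rfl hcyc]

theorem norm_smul_comp_mul_pow_le [NormOneClass A] (c : 𝕂) (k : ℕ) {x : A} {R : ℝ}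
    (hx : ‖x‖ ≤ R) : ‖c • τ.comp (mul 𝕂 A (x ^ k))‖ ≤ ‖τ‖ * (‖c‖ * R ^ k) :=
  calc ‖c • τ.comp (mul 𝕂 A (x ^ k))‖
      ≤ ‖c‖ * (‖τ‖ * ‖x ^ k‖) := by
        rw [norm_smul]
        gcongr
        exact (opNorm_comp_le _ _).trans (by gcongr; exact opNorm_mul_apply_le _ _ _)
    _ ≤ ‖c‖ * (‖τ‖ * R ^ k) := by
        gcongr
        exact (norm_pow_le _ _).trans (pow_le_pow_left₀ (norm_nonneg _) hx _)
    _ = ‖τ‖ * (‖c‖ * R ^ k) := by ring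

theorem hasFDerivAt_tracial_exp [CompleteSpace A] [NormOneClass A]
    (hτ : ∀ a b, τ (a * b) = τ (b * a)) (y : A) :
    HasFDerivAt (fun x => τ (exp x)) (τ.comp (mul 𝕂 A (exp y))) y := by
  set R := ‖y‖ + 1
  set c : ℕ → 𝕂 := fun k => (k ! : 𝕂)⁻¹ * k
  have hterm (k : ℕ) (x : A) : HasFDerivAt (fun x => (k ! : 𝕂)⁻¹ * τ (x ^ k))
      (c k • τ.comp (mul 𝕂 A (x ^ (k - 1)))) x := by
    simpa only [c, smul_smul] using (hasFDerivAt_tracial_pow hτ k x).const_mul (k ! : 𝕂)⁻¹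
  have hbound (k : ℕ) (x : A) (hx : x ∈ Metric.ball y 1) :
      ‖c k • τ.comp (mul 𝕂 A (x ^ (k - 1)))‖ ≤ ‖τ‖ * (((k ! : ℝ)⁻¹ * k) * R ^ (k - 1)) := by
    have hxR : ‖x‖ ≤ R := by
      linarith [norm_le_insert' x y, mem_ball_iff_norm.1 hx]
    simpa [c] using norm_smul_comp_mul_pow_le (c k) (k - 1) hxR
  have hsummable : Summable fun k : ℕ => ‖τ‖ * (((k ! : ℝ)⁻¹ * k) * R ^ (k - 1)) :=
    (hasSum_termwise_deriv_exp (𝕂 := ℝ) R).summable.mul_left _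
  have hexp (x : A) : HasSum (fun k => (k ! : 𝕂)⁻¹ * τ (x ^ k)) (τ (exp x)) := by
    simpa only [map_smul, smul_eq_mul] using (exp_series_hasSum_exp' (𝕂 := 𝕂) x).mapL τ
  have hderiv : HasSum (fun k => c k • τ.comp (mul 𝕂 A (y ^ (k - 1))))
      (τ.comp (mul 𝕂 A (exp y))) := by
    have h := (hasSum_termwise_deriv_exp (𝕂 := 𝕂) y).mapL ((compL 𝕂 A A 𝕂 τ).comp (mul 𝕂 A))
    simp only [map_smul] at h
    exact h
  let : NormedSpace ℝ A := NormedSpace.restrictScalars ℝ 𝕂 A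
  have h := hasFDerivAt_tsum_of_isPreconnected hsummable Metric.isOpen_ball
    (convex_ball y 1).isPreconnected (fun k x _ => hterm k x) hbound
    (Metric.mem_ball_self one_pos) (hexp y).summable (Metric.mem_ball_self one_pos)
  rwa [hderiv.tsum_eq, funext fun x => (hexp x).tsum_eq] at h

end Tracial

section MatrixExp

variable {m 𝕜 : Type*} [Fintype m] [DecidableEq m] [RCLike 𝕜]

theorem Matrix.hasFDerivAt_trace_exp [Nonempty m] (Y : Matrix m m 𝕜) :
    HasFDerivAt (fun X => trace (exp X))
      ((traceLinearMap m 𝕜 𝕜).toContinuousLinearMap.comp (mul 𝕜 _ (exp Y))) Y :=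
  hasFDerivAt_tracial_exp (τ := (traceLinearMap m 𝕜 𝕜).toContinuousLinearMap) trace_mul_comm Y

open scoped ComplexOrder in
theorem Matrix.IsHermitian.posDef_exp {A : Matrix m m 𝕜} (hA : A.IsHermitian) :
    (NormedSpace.exp A).PosDef := by
  set B := NormedSpace.exp ((2⁻¹ : ℝ) • A)
  have hB : B.IsHermitian := (hA.smul (IsSelfAdjoint.all _)).exp
  have hsplit : NormedSpace.exp A = Bᴴ * B := by
    rw [hB.eq, ← exp_add_of_commute _ _ (Commute.refl _), ← add_smul]
    norm_num
  rw [hsplit]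
  exact PosDef.conjTranspose_mul_self B (mulVec_injective_iff_isUnit.2 (isUnit_exp _))

end MatrixExp

/-- Differentiation formula `dW(f) = ⟨df⟩_f` for the generating functional:
if `f : ℝ → ℂ^{n×n}` takes Hermitian values and is differentiable at `λ` with derivative
`f'`, then `t ↦ W(f(t)) = -log Re tr(exp(-f(t)))` is differentiable at `λ` with derivative
`Re tr(exp(-f(λ))·f') / Z(λ)`, where `Z(λ) = Re tr(exp(-f(λ)))`. -/
theorem hasDerivAt_genFunctional
    {n : ℕ} (hn : 1 ≤ n)
    (f : ℝ → Matrix (Fin n) (Fin n) ℂ)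
    (hherm : ∀ t, (f t).IsHermitian)
    (f' : Matrix (Fin n) (Fin n) ℂ) (l : ℝ)
    (hf : HasDerivAt f f' l) :
    HasDerivAt (fun t => -Real.log ((Matrix.trace (NormedSpace.exp (-f t))).re))
      ((Matrix.trace (NormedSpace.exp (-f l) * f')).re
        / (Matrix.trace (NormedSpace.exp (-f l))).re) l := by
  have : Nonempty (Fin n) := ⟨⟨0, hn⟩⟩
  have hZ : 0 < (trace (exp (-f l))).re := by
    open ComplexOrder in exact (Complex.pos_iff.1 (hherm l).neg.posDef_exp.trace_pos).1
  have htrace : HasDerivAt (fun t => trace (exp (-f t))) (trace (exp (-f l) * -f')) l := by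
    exact ((hasFDerivAt_trace_exp (-f l)).restrictScalars ℝ).comp_hasDerivAt l hf.fun_neg
  simpa [neg_div] using ((Complex.reCLM.hasFDerivAt.comp_hasDerivAt l htrace).log hZ.ne').fun_neg
end

section
/- Let n ≥ 1, let k > 0 and T > 0 be real constants, let H and X₁, …, X_m be Hermitian complex n×n matrices, and let α ∈ ℝ^m satisfy the equation of state Re trace(exp(−(H − ∑ⱼ αⱼ·Xⱼ)/(k·T))) = 1. Let S be any Hermitian complex n×n matrix with Re trace(exp(−S/k)) = 1, and set H̄ = Re trace(exp(−S/k)·H), S̄ = Re trace(exp(−S/k)·S), X̄ⱼ = Re trace(exp(−S/k)·Xⱼ). Then H̄ ≥ T·S̄ + ∑ⱼ αⱼ·X̄ⱼ, and equality holds if and only if S = T⁻¹·(H − ∑ⱼ αⱼ·Xⱼ). -/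
/-!
Klein's inequality for the convex function `x ↦ exp (-x)`. Diagonalising `A = U diag(a) Uᴴ` and
`B = V diag(b) Vᴴ`, the defect `tr e^{-A}(B - A) - tr e^{-A} + tr e^{-B}` equals
`∑ᵢⱼ |(UᴴV)ᵢⱼ|² (e^{-bⱼ} - e^{-aᵢ} + (bⱼ - aᵢ) e^{-aᵢ})`, a sum of nonnegative tangent-line gaps
which vanishes only if `aᵢ = bⱼ` wherever `(UᴴV)ᵢⱼ ≠ 0`; then `UᴴV` intertwines `diag(a)` and
`diag(b)`, forcing `A = B`. For `A = S/k` and `B = S_c/k` both traces are `1` by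
normalisation and the equation of state, and the defect is `(kT)⁻¹ (H̄ - T S̄ - α·X̄)`.
-/

open Matrix

namespace Real

theorem exp_neg_sub_mul_exp_neg_le (a b : ℝ) : exp (-a) - (b - a) * exp (-a) ≤ exp (-b) := by
  have h := mul_le_mul_of_nonneg_right (add_one_le_exp (a - b)) (exp_pos (-a)).le
  rw [← exp_add, show a - b + -a = -b by ring] at h
  linarith

theorem exp_neg_sub_mul_exp_neg_lt {a b : ℝ} (hab : a ≠ b) :
    exp (-a) - (b - a) * exp (-a) < exp (-b) := by
  have h := mul_lt_mul_of_pos_right (add_one_lt_exp (sub_ne_zero.2 hab)) (exp_pos (-a))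
  rw [← exp_add, show a - b + -a = -b by ring] at h
  linarith

end Real

theorem Unitary.conj_eq_conj_of_intertwines {R : Type*} [Monoid R] [StarMul R] {u v : unitary R}
    {x y : R} (h : x * (star (u : R) * v) = star (u : R) * v * y) :
    (u : R) * x * star (u : R) = v * y * star (v : R) :=
  calc (u : R) * x * star (u : R) = u * (x * (star (u : R) * v)) * star (v : R) := by
        simp only [mul_assoc, Unitary.mul_star_self_of_mem v.2, mul_one]
    _ = u * (star (u : R) * v * y) * star (v : R) := by rw [h]
    _ = v * y * star (v : R) := by
        simp only [← mul_assoc, Unitary.mul_star_self_of_mem u.2, one_mul]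

namespace Matrix

variable {ι 𝕜 : Type*} [Fintype ι] [DecidableEq ι] [RCLike 𝕜]

theorem trace_diagonal_mul_mul_diagonal_mul_conjTranspose (p q : ι → ℝ) (W : Matrix ι ι 𝕜) :
    trace (diagonal (RCLike.ofReal ∘ p) * W * diagonal (RCLike.ofReal ∘ q) * Wᴴ)
      = ((∑ i, ∑ j, p i * q j * ‖W i j‖ ^ 2 : ℝ) : 𝕜) := by
  simp only [trace, diag, mul_apply (M := diagonal _ * W * diagonal _), diagonal_mul, mul_diagonal,
    conjTranspose_apply, Function.comp_apply, RCLike.ofReal_sum, RCLike.ofReal_mul,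
    RCLike.ofReal_pow]
  refine Finset.sum_congr rfl fun i _ => Finset.sum_congr rfl fun j _ => ?_
  rw [RCLike.star_def, ← RCLike.mul_conj]
  ring

theorem exp_diagonal_ofReal (d : ι → ℝ) :
    NormedSpace.exp (diagonal (RCLike.ofReal ∘ d : ι → 𝕜)) =
      diagonal (RCLike.ofReal ∘ Real.exp ∘ d) := by
  rw [exp_diagonal, Pi.exp_def]
  congr 1
  funext i
  rw [Real.exp_eq_exp_ℝ]
  exact (NormedSpace.map_exp (algebraMap ℝ 𝕜) RCLike.continuous_ofReal (d i)).symm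

namespace IsHermitian

variable {A B : Matrix ι ι 𝕜}

theorem exp_cfc (hA : A.IsHermitian) (f : ℝ → ℝ) :
    NormedSpace.exp (hA.cfc f) = hA.cfc (fun x => Real.exp (f x)) := by
  have h := exp_units_conj (Unitary.toUnits hA.eigenvectorUnitary)
    (diagonal (RCLike.ofReal ∘ f ∘ hA.eigenvalues))
  rw [exp_diagonal_ofReal] at h
  exact h

theorem trace_cfc_mul_cfc (hA : A.IsHermitian) (hB : B.IsHermitian) (f g : ℝ → ℝ) :
    trace (hA.cfc f * hB.cfc g) = ((∑ i, ∑ j, f (hA.eigenvalues i) * g (hB.eigenvalues j) *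
      ‖((hA.eigenvectorUnitary : Matrix ι ι 𝕜)ᴴ * hB.eigenvectorUnitary) i j‖ ^ 2 : ℝ) : 𝕜) := by
  set U : Matrix ι ι 𝕜 := ↑hA.eigenvectorUnitary
  set V : Matrix ι ι 𝕜 := ↑hB.eigenvectorUnitary
  set P := diagonal (RCLike.ofReal ∘ f ∘ hA.eigenvalues : ι → 𝕜)
  set Q := diagonal (RCLike.ofReal ∘ g ∘ hB.eigenvalues : ι → 𝕜)
  have h : hA.cfc f * hB.cfc g = U * (P * (Uᴴ * V) * Q * Vᴴ) := by
    simp only [IsHermitian.cfc, Unitary.conjStarAlgAut_apply, star_eq_conjTranspose,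
      Matrix.mul_assoc]
    rfl
  rw [h, trace_mul_comm, show P * (Uᴴ * V) * Q * Vᴴ * U = P * (Uᴴ * V) * Q * (Uᴴ * V)ᴴ by
    simp only [conjTranspose_mul, conjTranspose_conjTranspose, Matrix.mul_assoc]]
  exact trace_diagonal_mul_mul_diagonal_mul_conjTranspose _ _ _

theorem cfc_neg_id (hA : A.IsHermitian) : hA.cfc (fun x => -x) = -A :=
  (hA.cfc_eq _).symm.trans (_root_.cfc_neg_id A hA.isSelfAdjoint)

theorem cfc_id (hA : A.IsHermitian) : hA.cfc (fun x => x) = A :=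
  (hA.cfc_eq _).symm.trans (_root_.cfc_id' ℝ A hA.isSelfAdjoint)

theorem cfc_one (hA : A.IsHermitian) : hA.cfc 1 = 1 :=
  (hA.cfc_eq _).symm.trans (_root_.cfc_one ℝ A)

theorem cfc_mul (hA : A.IsHermitian) (f g : ℝ → ℝ) :
    hA.cfc (fun x => f x * g x) = hA.cfc f * hA.cfc g := by
  rw [IsHermitian.cfc, IsHermitian.cfc, IsHermitian.cfc, ← map_mul, diagonal_mul_diagonal]
  simp only [Function.comp_def, RCLike.ofReal_mul]

theorem exp_neg_eq_cfc (hA : A.IsHermitian) :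
    NormedSpace.exp (-A) = hA.cfc (fun x => Real.exp (-x)) := by
  rw [← hA.cfc_neg_id, exp_cfc]

theorem klein_defect_eq_sum (hA : A.IsHermitian) (hB : B.IsHermitian) :
    RCLike.re (trace (NormedSpace.exp (-A) * (B - A))) -
        (RCLike.re (trace (NormedSpace.exp (-A))) - RCLike.re (trace (NormedSpace.exp (-B)))) =
      ∑ i, ∑ j, (Real.exp (-hB.eigenvalues j) - (Real.exp (-hA.eigenvalues i) -
          (hB.eigenvalues j - hA.eigenvalues i) * Real.exp (-hA.eigenvalues i))) *
        ‖((hA.eigenvectorUnitary : Matrix ι ι 𝕜)ᴴ * hB.eigenvectorUnitary) i j‖ ^ 2 := by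
  have hAA : NormedSpace.exp (-A) * A =
      hA.cfc (fun x => Real.exp (-x) * x) * hB.cfc 1 := by
    rw [hB.cfc_one, Matrix.mul_one, hA.cfc_mul, ← hA.exp_neg_eq_cfc, hA.cfc_id]
  have hAB : NormedSpace.exp (-A) * B = hA.cfc (fun x => Real.exp (-x)) * hB.cfc (fun x => x) := by
    rw [hB.cfc_id, hA.exp_neg_eq_cfc]
  have hA1 : NormedSpace.exp (-A) = hA.cfc (fun x => Real.exp (-x)) * hB.cfc 1 := by
    rw [hB.cfc_one, Matrix.mul_one, hA.exp_neg_eq_cfc]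
  have hB1 : NormedSpace.exp (-B) = hA.cfc 1 * hB.cfc (fun x => Real.exp (-x)) := by
    rw [hA.cfc_one, Matrix.one_mul, hB.exp_neg_eq_cfc]
  rw [Matrix.mul_sub, trace_sub, map_sub, hAA, hAB, hA1, hB1]
  simp only [trace_cfc_mul_cfc, RCLike.ofReal_re, ← Finset.sum_sub_distrib]
  refine Finset.sum_congr rfl fun i _ => Finset.sum_congr rfl fun j _ => ?_
  simp only [Pi.one_apply]
  ring

theorem klein_inequality (hA : A.IsHermitian) (hB : B.IsHermitian) :
    RCLike.re (trace (NormedSpace.exp (-A))) - RCLike.re (trace (NormedSpace.exp (-B))) ≤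
      RCLike.re (trace (NormedSpace.exp (-A) * (B - A))) := by
  rw [← sub_nonneg, hA.klein_defect_eq_sum hB]
  exact Finset.sum_nonneg fun i _ => Finset.sum_nonneg fun j _ =>
    mul_nonneg (sub_nonneg.2 (Real.exp_neg_sub_mul_exp_neg_le _ _)) (sq_nonneg _)

theorem klein_inequality_eq_iff (hA : A.IsHermitian) (hB : B.IsHermitian) :
    RCLike.re (trace (NormedSpace.exp (-A) * (B - A))) =
        RCLike.re (trace (NormedSpace.exp (-A))) - RCLike.re (trace (NormedSpace.exp (-B))) ↔
      A = B := by
  refine ⟨fun h => ?_, by rintro rfl; simp⟩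
  set a := hA.eigenvalues
  set b := hB.eigenvalues
  set W : Matrix ι ι 𝕜 := (hA.eigenvectorUnitary : Matrix ι ι 𝕜)ᴴ * hB.eigenvectorUnitary
  have hdefect := hA.klein_defect_eq_sum hB
  rw [h, sub_self, eq_comm, ← Fintype.sum_prod_type'] at hdefect
  have hW : ∀ i j, a i ≠ b j → W i j = 0 := by
    intro i j hij
    have hterm := congrFun ((Fintype.sum_eq_zero_iff_of_nonneg fun _ => mul_nonneg (sub_nonneg.2
      (Real.exp_neg_sub_mul_exp_neg_le _ _)) (sq_nonneg _)).1 hdefect) (i, j)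
    have hpos := sub_pos.2 (Real.exp_neg_sub_mul_exp_neg_lt hij)
    exact norm_eq_zero.1 <| (pow_eq_zero_iff two_ne_zero).1 <|
      (mul_eq_zero.1 hterm).resolve_left hpos.ne'
  have hcomm : diagonal (RCLike.ofReal ∘ a) * W = W * diagonal (RCLike.ofReal ∘ b) := by
    ext i j
    rw [diagonal_mul, mul_diagonal]
    by_cases hij : a i = b j
    · simp [hij, mul_comm]
    · simp [hW i j hij]
  rw [hA.spectral_theorem, hB.spectral_theorem]
  exact Unitary.conj_eq_conj_of_intertwines hcomm

end IsHermitian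
end Matrix

theorem thermal_state_comparison_general
    {n m : ℕ} (k T : ℝ) (hk : 0 < k) (hT : 0 < T)
    (H : Matrix (Fin n) (Fin n) ℂ) (X : Fin m → Matrix (Fin n) (Fin n) ℂ)
    (hH : H.IsHermitian) (hX : ∀ j, (X j).IsHermitian)
    (α : Fin m → ℝ)
    (heos : (Matrix.trace (NormedSpace.exp
        (-((k * T)⁻¹ • (H - ∑ j, α j • X j))))).re = 1)
    (S : Matrix (Fin n) (Fin n) ℂ) (hS : S.IsHermitian)
    (hS1 : (Matrix.trace (NormedSpace.exp (-(k⁻¹ • S)))).re = 1) :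
    (T * (Matrix.trace (NormedSpace.exp (-(k⁻¹ • S)) * S)).re
        + ∑ j, α j * (Matrix.trace (NormedSpace.exp (-(k⁻¹ • S)) * X j)).re
      ≤ (Matrix.trace (NormedSpace.exp (-(k⁻¹ • S)) * H)).re) ∧
      ((T * (Matrix.trace (NormedSpace.exp (-(k⁻¹ • S)) * S)).re
          + ∑ j, α j * (Matrix.trace (NormedSpace.exp (-(k⁻¹ • S)) * X j)).re
        = (Matrix.trace (NormedSpace.exp (-(k⁻¹ • S)) * H)).re)
        ↔ S = T⁻¹ • (H - ∑ j, α j • X j)) := by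
  set Sc := T⁻¹ • (H - ∑ j, α j • X j)
  have hSc : Sc.IsHermitian := (hH.sub (isSelfAdjoint_sum _ fun j _ =>
    (hX j).smul (IsSelfAdjoint.all (α j)))).smul (IsSelfAdjoint.all T⁻¹)
  have hA := hS.smul (IsSelfAdjoint.all k⁻¹)
  have hB := hSc.smul (IsSelfAdjoint.all k⁻¹)
  have heos' : (trace (NormedSpace.exp (-(k⁻¹ • Sc)))).re = 1 := by
    rwa [smul_smul, ← mul_inv]
  have hvalue : (trace (NormedSpace.exp (-(k⁻¹ • S)) * (k⁻¹ • Sc - k⁻¹ • S))).re =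
      (k * T)⁻¹ * ((trace (NormedSpace.exp (-(k⁻¹ • S)) * H)).re -
        (T * (trace (NormedSpace.exp (-(k⁻¹ • S)) * S)).re +
          ∑ j, α j * (trace (NormedSpace.exp (-(k⁻¹ • S)) * X j)).re)) := by
    simp only [Sc, Matrix.mul_sub, Matrix.mul_smul, Matrix.mul_sum, trace_sub, trace_smul,
      trace_sum, Complex.sub_re, Complex.smul_re, Complex.re_sum, smul_eq_mul]
    field_simp
    ring
  have hle := hA.klein_inequality hB
  have hiff := hA.klein_inequality_eq_iff hB
  simp only [RCLike.re_to_complex, hS1, heos', sub_self, hvalue] at hle hiff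
  have hkT : 0 < (k * T)⁻¹ := by positivity
  refine ⟨sub_nonneg.1 ((mul_nonneg_iff_of_pos_left hkT).1 hle), ?_⟩
  rw [eq_comm, ← sub_eq_zero, ← mul_eq_zero_iff_left hkT.ne', hiff,
    smul_right_inj (inv_ne_zero hk.ne')]

/-- Comparison of an arbitrary Gibbs state with thermal states: if `(T, α)`
satisfies the equation of state `Re tr(exp(-(H - ∑ αⱼXⱼ)/(kT))) = 1`, then the values
`H̄, S̄, X̄ⱼ` in any Gibbs state with entropy `S` satisfy `H̄ ≥ T·S̄ + ∑ αⱼ·X̄ⱼ`, with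
equality iff `S = T⁻¹(H - ∑ αⱼXⱼ)`. -/
theorem thermal_state_comparison
    {n m : ℕ} (hn : 1 ≤ n) (k T : ℝ) (hk : 0 < k) (hT : 0 < T)
    (H : Matrix (Fin n) (Fin n) ℂ) (X : Fin m → Matrix (Fin n) (Fin n) ℂ)
    (hH : H.IsHermitian) (hX : ∀ j, (X j).IsHermitian)
    (α : Fin m → ℝ)
    (heos : (Matrix.trace (NormedSpace.exp
        (-((k * T)⁻¹ • (H - ∑ j, α j • X j))))).re = 1)
    (S : Matrix (Fin n) (Fin n) ℂ) (hS : S.IsHermitian)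
    (hS1 : (Matrix.trace (NormedSpace.exp (-(k⁻¹ • S)))).re = 1) :
    (T * (Matrix.trace (NormedSpace.exp (-(k⁻¹ • S)) * S)).re
        + ∑ j, α j * (Matrix.trace (NormedSpace.exp (-(k⁻¹ • S)) * X j)).re
      ≤ (Matrix.trace (NormedSpace.exp (-(k⁻¹ • S)) * H)).re) ∧
      ((T * (Matrix.trace (NormedSpace.exp (-(k⁻¹ • S)) * S)).re
          + ∑ j, α j * (Matrix.trace (NormedSpace.exp (-(k⁻¹ • S)) * X j)).re
        = (Matrix.trace (NormedSpace.exp (-(k⁻¹ • S)) * H)).re)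
        ↔ S = T⁻¹ • (H - ∑ j, α j • X j)) :=
  thermal_state_comparison_general k T hk hT H X hH hX α heos S hS hS1
end
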